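/- arXiv:1306.6065 — 4 statements merged into one kernel-verified Lean document; each statement's English description precedes it below -/
import Mathlib

section
/- Let F be a free group and R a normal subgroup with Q = F/R perfect and H_2(Q) = 0 (Q super-perfect). Then the inclusion F ×_Q F ↪ F × F induces an isomorphism on first homology (abelianizations). -/
/-!
Write `P = F ×_Q F`. An element `(a, b)` of `P` lying in `[F × F, F × F] = [F, F] × [F, F]`
factors as `(a, a) * (1, a⁻¹ b)`. The diagonal factor is a product of commutators of diagonal
elements, and `a⁻¹ b ∈ R ∩ [F, F] = [F, R]`, whose generators `(1, [g, s]) = [(g, g), (1, s)]`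
are commutators in `P`; so `P ∩ [F × F, F × F] = [P, P]` and the induced map is injective.
For surjectivity, write `a⁻¹ b = r c` with `r ∈ R`, `c ∈ [F, F]`; then `(a, b c⁻¹) ∈ P` and
`(a, b) ≡ (a, b c⁻¹)` modulo commutators.
-/

open Subgroup
open scoped commutatorElement

theorem commutator_prod (G H : Type*) [Group G] [Group H] :
    commutator (G × H) = (commutator G).prod (commutator H) := by
  rw [commutator_def, commutator_def, commutator_def, ← top_prod_top, commutator_prod_prod]

namespace Abelianization

variable {G : Type*} [Group G] (H : Subgroup G)

theorem map_subtype_surjective_of_sup_commutator_eq_top (h : H ⊔ commutator G = ⊤) :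
    Function.Surjective (map H.subtype) := by
  rintro ⟨g⟩
  obtain ⟨k, hk, c, hc, rfl⟩ := mem_sup_of_normal_right.mp (h ▸ mem_top g)
  have hc : of c = 1 := by rwa [← MonoidHom.mem_ker, ker_of]
  exact ⟨of ⟨k, hk⟩, by rw [map_of, mk_eq_of, map_mul, hc, mul_one]; rfl⟩

theorem map_subtype_injective_of_inf_commutator_le (h : H ⊓ commutator G ≤ ⁅H, H⁆) :
    Function.Injective (map H.subtype) := by
  rw [injective_iff_map_eq_one]
  rintro ⟨p⟩ hp
  rw [mk_eq_of, map_of, ← MonoidHom.mem_ker, ker_of] at hp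
  obtain ⟨q, hq, hqp⟩ := (H.map_subtype_commutator ▸ h ⟨p.2, hp⟩ :
    (p : G) ∈ (commutator H).map H.subtype)
  rw [mk_eq_of, ← MonoidHom.mem_ker, ker_of, ← Subtype.ext hqp]
  exact hq

end Abelianization

namespace Subgroup

variable {G : Type*} [Group G] (N : Subgroup G) [N.Normal]

abbrev fiberProduct : Subgroup (G × G) :=
  MonoidHom.eqLocus ((QuotientGroup.mk' N).comp (MonoidHom.fst G G))
    ((QuotientGroup.mk' N).comp (MonoidHom.snd G G))

variable {N}

theorem mem_fiberProduct {g : G × G} : g ∈ N.fiberProduct ↔ g.1⁻¹ * g.2 ∈ N :=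
  QuotientGroup.eq

theorem diag_mem_commutator_fiberProduct {a : G} (ha : a ∈ _root_.commutator G) :
    (a, a) ∈ ⁅N.fiberProduct, N.fiberProduct⁆ := by
  have hdiag {g : G} : (g, g) ∈ N.fiberProduct := rfl
  suffices _root_.commutator G ≤
      ⁅N.fiberProduct, N.fiberProduct⁆.comap ((MonoidHom.id G).prod (MonoidHom.id G)) from this ha
  rw [_root_.commutator_def, commutator_le]
  exact fun _ _ _ _ ↦ commutator_mem_commutator hdiag hdiag

theorem one_prod_mem_commutator_fiberProduct {r : G} (hr : r ∈ ⁅(⊤ : Subgroup G), N⁆) :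
    (1, r) ∈ ⁅N.fiberProduct, N.fiberProduct⁆ := by
  suffices ⁅(⊤ : Subgroup G), N⁆ ≤ ⁅N.fiberProduct, N.fiberProduct⁆.comap (MonoidHom.inr G G)
    from this hr
  rw [commutator_le]
  intro g _ s hs
  have hgs : ((1 : G), ⁅g, s⁆) = ⁅(g, g), ((1 : G), s)⁆ := by
    simp [commutatorElement_def]
  rw [mem_comap, MonoidHom.inr_apply, hgs]
  exact commutator_mem_commutator (rfl : (g, g) ∈ N.fiberProduct)
    (mem_fiberProduct.mpr (by simpa using hs))

theorem fiberProduct_inf_commutator_le (h : N ⊓ _root_.commutator G ≤ ⁅(⊤ : Subgroup G), N⁆) :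
    N.fiberProduct ⊓ _root_.commutator (G × G) ≤ ⁅N.fiberProduct, N.fiberProduct⁆ := by
  intro g hg
  rw [mem_inf, commutator_prod, mem_prod] at hg
  obtain ⟨hg, hcomm⟩ := hg
  have hsplit : g = (g.1, g.1) * (1, g.1⁻¹ * g.2) := by simp
  rw [hsplit]
  exact mul_mem (diag_mem_commutator_fiberProduct hcomm.1)
    (one_prod_mem_commutator_fiberProduct
      (h (mem_inf.mpr ⟨mem_fiberProduct.mp hg, mul_mem (inv_mem hcomm.1) hcomm.2⟩)))

theorem fiberProduct_sup_commutator_eq_top (h : N ⊔ _root_.commutator G = ⊤) :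
    N.fiberProduct ⊔ _root_.commutator (G × G) = ⊤ := by
  refine eq_top_iff.mpr fun ⟨a, b⟩ _ ↦ ?_
  obtain ⟨r, hr, c, hc, hrc⟩ := mem_sup_of_normal_right.mp (h ▸ mem_top (a⁻¹ * b))
  have hsplit : (a, b) = (a, b * c⁻¹) * (1, c) := by simp
  rw [hsplit]
  refine mul_mem_sup (mem_fiberProduct.mpr ?_) ?_
  · simpa [← mul_assoc, ← hrc] using hr
  · rw [commutator_prod]
    exact ⟨one_mem _, hc⟩

end Subgroup

/-- Let `F` be a free group and `R` a normal subgroup with `Q = F/R` super-perfect, i.e.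
`Q` is perfect (`H₁(Q) = 0`) and, via Hopf's formula, `H₂(Q) = (R ∩ [F,F])/[F,R] = 0`.
Then the inclusion `F ×_Q F ↪ F × F` induces an isomorphism on abelianizations. -/
theorem fiberProduct_abelianization_iso_of_superperfect {α : Type*}
    (R : Subgroup (FreeGroup α)) [R.Normal]
    (hH1 : R ⊔ commutator (FreeGroup α) = ⊤)
    (hH2 : R ⊓ commutator (FreeGroup α) ≤ ⁅(⊤ : Subgroup (FreeGroup α)), R⁆) :
    ∃ ψ : Abelianization
        ↥(MonoidHom.eqLocus ((QuotientGroup.mk' R).comp (MonoidHom.fst (FreeGroup α) (FreeGroup α)))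
            ((QuotientGroup.mk' R).comp (MonoidHom.snd (FreeGroup α) (FreeGroup α)))) →*
        Abelianization (FreeGroup α × FreeGroup α),
      (∀ x, ψ (Abelianization.of x) = Abelianization.of (↑x : FreeGroup α × FreeGroup α)) ∧
      Function.Bijective ψ :=
  ⟨Abelianization.map R.fiberProduct.subtype, fun _ ↦ Abelianization.map_of _ _,
    Abelianization.map_subtype_injective_of_inf_commutator_le _
      (fiberProduct_inf_commutator_le hH2),
    Abelianization.map_subtype_surjective_of_sup_commutator_eq_top _
      (fiberProduct_sup_commutator_eq_top hH1)⟩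
end

section
/- A group G with a balanced finite presentation (equal numbers of generators and relators) and trivial abelianization H_1(G) = 0 satisfies H_2(G) = 0, i.e., G is super-perfect. -/
/-!
Write `R` as the normal closure of `t₁, …, tₙ` in `F = FreeGroup (Fin n)`. Modulo `[F, R]` the
image of `R` is central, hence generated by the images of the `tᵢ`: every `x ∈ R` is congruent to
`lift t w` modulo `[F, R]`. As `H₁ = 0`, `R` maps onto `Fᵃᵇ ≅ ℤⁿ`, so the endomorphism of `ℤⁿ`
induced by `xᵢ ↦ tᵢ` is surjective, hence injective. For `x ∈ R ∩ [F, F]` this forces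
`w ∈ [F, F]`, and `lift t` maps `[F, F]` into `[R, R] ≤ [F, R]`.
-/

open Subgroup

theorem Abelianization.of_surjective {G : Type*} [Group G] :
    Function.Surjective (Abelianization.of : G →* Abelianization G) :=
  QuotientGroup.mk_surjective

namespace Subgroup

variable {G : Type*} [Group G]

theorem normalClosure_eq_closure_of_subset_center {s : Set G} (hs : s ⊆ center G) :
    normalClosure s = closure s := by
  have hcl : closure s ≤ center G := closure_le _ |>.mpr hs
  have : (closure s).Normal :=
    ⟨fun a ha g => by rwa [mem_center_iff.mp (hcl ha) g, mul_inv_cancel_right]⟩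
  exact le_antisymm (normalClosure_le_normal subset_closure) closure_le_normalClosure

theorem map_mk_commutator_top_le_center (N : Subgroup G) [N.Normal] :
    N.map (QuotientGroup.mk' ⁅(⊤ : Subgroup G), N⁆) ≤ center (G ⧸ ⁅(⊤ : Subgroup G), N⁆) := by
  rw [← commutator_top_left_eq_bot_iff_le_center,
    ← map_top_of_surjective _ (QuotientGroup.mk'_surjective _), ← map_commutator,
    Subgroup.map_eq_bot_iff, QuotientGroup.ker_mk']

theorem map_mk_commutator_top_normalClosure (s : Set G) :
    (normalClosure s).map (QuotientGroup.mk' ⁅(⊤ : Subgroup G), normalClosure s⁆) =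
      (closure s).map (QuotientGroup.mk' ⁅(⊤ : Subgroup G), normalClosure s⁆) := by
  have hcentral := map_mk_commutator_top_le_center (normalClosure s)
  rw [map_normalClosure _ _ (QuotientGroup.mk'_surjective _)] at hcentral ⊢
  rw [MonoidHom.map_closure]
  exact normalClosure_eq_closure_of_subset_center (subset_normalClosure.trans hcentral)

theorem map_abelianizationOf_eq_top (N : Subgroup G) [N.Normal]
    [Subsingleton (Abelianization (G ⧸ N))] : N.map Abelianization.of = ⊤ := by
  have hQ : _root_.commutator (G ⧸ N) = ⊤ := by
    rw [eq_top_iff]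
    intro q _
    rw [← Abelianization.ker_of, MonoidHom.mem_ker]
    exact Subsingleton.elim _ _
  have hG : _root_.commutator G ⊔ N = ⊤ := by
    rw [← QuotientGroup.ker_mk' N, ← comap_map_eq, map_commutator_eq, QuotientGroup.range_mk',
      ← _root_.commutator_def, hQ, comap_top]
  rw [← map_comap_eq_self_of_surjective Abelianization.of_surjective (N.map _), comap_map_eq,
    Abelianization.ker_of, sup_comm, hG, map_top_of_surjective _ Abelianization.of_surjective]

theorem map_abelianizationOf_normalClosure (s : Set G) :
    (normalClosure s).map Abelianization.of = (closure s).map Abelianization.of := by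
  rw [map_normalClosure _ _ Abelianization.of_surjective, MonoidHom.map_closure]
  exact normalClosure_eq_closure_of_subset_center (by simp [CommGroup.center_eq_top])

end Subgroup

instance Abelianization.fg {G : Type*} [Group G] [Group.FG G] : Group.FG (Abelianization G) :=
  QuotientGroup.fg _

theorem MonoidHom.injective_of_surjective_of_fg {A : Type*} [CommGroup A] [Group.FG A]
    (f : A →* A) (hf : Function.Surjective f) : Function.Injective f :=
  OrzechProperty.injective_of_surjective_endomorphism (R := ℤ)
    f.toAdditive.toIntLinearMap hf

namespace FreeGroup

variable {ι : Type*}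

theorem abelianizationMap_lift_surjective (t : ι → FreeGroup ι)
    [Subsingleton (Abelianization (FreeGroup ι ⧸ normalClosure (Set.range t)))] :
    Function.Surjective (Abelianization.map (lift t)) := by
  rw [← MonoidHom.range_eq_top, eq_top_iff,
    ← map_abelianizationOf_eq_top (normalClosure (Set.range t)),
    map_abelianizationOf_normalClosure, ← range_lift_eq_closure]
  rintro _ ⟨_, ⟨w, rfl⟩, rfl⟩
  exact ⟨Abelianization.of w, Abelianization.map_of _ _⟩

theorem normalClosure_range_inf_commutator_le [Finite ι] (t : ι → FreeGroup ι)
    [Subsingleton (Abelianization (FreeGroup ι ⧸ normalClosure (Set.range t)))] :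
    normalClosure (Set.range t) ⊓ commutator (FreeGroup ι) ≤
      ⁅(⊤ : Subgroup (FreeGroup ι)), normalClosure (Set.range t)⁆ := by
  set R := normalClosure (Set.range t)
  set C := ⁅(⊤ : Subgroup (FreeGroup ι)), R⁆
  have hinj : Function.Injective (Abelianization.map (lift t)) :=
    MonoidHom.injective_of_surjective_of_fg _ (abelianizationMap_lift_surjective t)
  have hlift_commutator : (commutator (FreeGroup ι)).map (lift t) ≤ C := by
    rw [map_commutator_eq, range_lift_eq_closure]
    exact commutator_mono le_top closure_le_normalClosure
  rintro x ⟨hxR, hxc⟩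
  obtain ⟨_, ⟨w, rfl⟩, hwx⟩ :
      QuotientGroup.mk' C x ∈ (lift t).range.map (QuotientGroup.mk' C) := by
    rw [range_lift_eq_closure, ← map_mk_commutator_top_normalClosure]
    exact mem_map_of_mem _ hxR
  obtain ⟨c, hc, rfl⟩ := (QuotientGroup.mk'_eq_mk' C).mp hwx
  have hlift_w : lift t w ∈ commutator (FreeGroup ι) :=
    (mul_mem_cancel_right (commutator_mono le_top le_top hc)).mp hxc
  have hw : w ∈ commutator (FreeGroup ι) := by
    rw [← Abelianization.ker_of, MonoidHom.mem_ker]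
    apply hinj
    rwa [_root_.map_one, Abelianization.map_of, ← MonoidHom.mem_ker, Abelianization.ker_of]
  exact mul_mem (hlift_commutator (mem_map_of_mem _ hw)) hc

end FreeGroup

/-- A group with a balanced finite presentation (`n` generators, `n` relators) and trivial
abelianization is super-perfect: via Hopf's formula for the presentation `1 → R → F → G → 1`
with `F` free of rank `n` and `R` the normal closure of `n` relators,
`H₂(G) = (R ∩ [F,F])/[F,R] = 0`. -/
theorem superperfect_of_balanced_presentation {n : ℕ}
    (R : Subgroup (FreeGroup (Fin n))) [R.Normal]
    (T : Finset (FreeGroup (Fin n))) (hT : T.card = n)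
    (hR : R = Subgroup.normalClosure (T : Set (FreeGroup (Fin n))))
    (hH1 : Subsingleton (Abelianization (FreeGroup (Fin n) ⧸ R))) :
    R ⊓ commutator (FreeGroup (Fin n)) ≤ ⁅(⊤ : Subgroup (FreeGroup (Fin n))), R⁆ := by
  obtain ⟨t, ht⟩ : ∃ t : Fin n → FreeGroup (Fin n), Set.range t = T :=
    ⟨Subtype.val ∘ (T.equivFinOfCardEq hT).symm, by
      rw [Set.range_comp, Equiv.range_eq_univ, Set.image_univ, Subtype.range_coe]⟩
  rw [← ht] at hR
  subst hR
  exact FreeGroup.normalClosure_range_inf_commutator_le t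
end

section
/- Let G = F/R with F free. For every finite k ≥ 1, the Dwyer filtration term φ_{k+1}(G) := ker(H_2(G) → H_2(G/γ_k(G))) is isomorphic to (R ∩ γ_{k+1}(F)·[F,R])/[F,R]. -/
open Subgroup QuotientGroup

namespace Subgroup

variable {G : Type*} [Group G] {A B N M : Subgroup G}

theorem inf_subgroupOf_of_le_left {H K L : Subgroup G} (hLH : L ≤ H) :
    (H ⊓ K).subgroupOf L = K.subgroupOf L := by
  rw [← inf_subgroupOf_left, ← inf_assoc, inf_of_le_left hLH, inf_subgroupOf_left]

def quotientInclusion (hAB : A ≤ B) (hNM : N ≤ M) [(N.subgroupOf A).Normal]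
    [(M.subgroupOf B).Normal] : A ⧸ N.subgroupOf A →* B ⧸ M.subgroupOf B :=
  QuotientGroup.map _ _ (inclusion hAB) (subgroupOf_mono A hNM)

theorem ker_quotientInclusion (hAB : A ≤ B) (hNM : N ≤ M) [(N.subgroupOf A).Normal]
    [(M.subgroupOf B).Normal] :
    (quotientInclusion hAB hNM).ker = (M.subgroupOf A).map (mk' (N.subgroupOf A)) :=
  ker_map _ _ _ _

end Subgroup

/-- Let `G = F/R` with `F` free.  For every finite `k ≥ 1` (here `k = m + 1`, with
`γ_k(F) = lowerCentralSeries F m` since `γ_1(F) = F`), the Dwyer filtration term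
`φ_{k+1}(G) = ker (H₂(G) → H₂(G/γ_k(G)))` — where, via Hopf's formula,
`H₂(G) = (R ∩ [F,F])/[F,R]`, `H₂(G/γ_k(G)) = (γ_k(F)·R ∩ [F,F])/(γ_{k+1}(F)·[F,R])`,
and the map is induced by inclusion — equals `(R ∩ γ_{k+1}(F)·[F,R])/[F,R]`. -/
theorem dwyer_filtration_eq {α : Type*} (R : Subgroup (FreeGroup α)) [R.Normal] (m : ℕ) :
    ∃ φ : (↥(R ⊓ commutator (FreeGroup α)) ⧸
          (⁅(⊤ : Subgroup (FreeGroup α)), R⁆.subgroupOf (R ⊓ commutator (FreeGroup α)))) →*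
        (↥((Subgroup.lowerCentralSeries (⊤ : Subgroup (FreeGroup α)) m ⊔ R) ⊓ commutator (FreeGroup α)) ⧸
          ((Subgroup.lowerCentralSeries (⊤ : Subgroup (FreeGroup α)) (m + 1) ⊔
              ⁅(⊤ : Subgroup (FreeGroup α)), R⁆).subgroupOf
            ((Subgroup.lowerCentralSeries (⊤ : Subgroup (FreeGroup α)) m ⊔ R) ⊓ commutator (FreeGroup α)))),
      (∀ a : ↥(R ⊓ commutator (FreeGroup α)),
        φ (QuotientGroup.mk a) =
          QuotientGroup.mk (Subgroup.inclusion (inf_le_inf_right _ le_sup_right) a)) ∧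
      φ.ker =
        (((R ⊓ (Subgroup.lowerCentralSeries (⊤ : Subgroup (FreeGroup α)) (m + 1) ⊔
            ⁅(⊤ : Subgroup (FreeGroup α)), R⁆)).subgroupOf
              (R ⊓ commutator (FreeGroup α))).map
          (QuotientGroup.mk'
            (⁅(⊤ : Subgroup (FreeGroup α)), R⁆.subgroupOf (R ⊓ commutator (FreeGroup α))))) := by
  refine ⟨quotientInclusion (inf_le_inf_right _ le_sup_right) le_sup_right, fun _ ↦ rfl, ?_⟩
  rw [ker_quotientInclusion, inf_subgroupOf_of_le_left inf_le_left]
end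

section
/- Let G = F/R with F free and suppose G is residually nilpotent. Then γ_ω(F/[F,R]) = (R ∩ γ_{k+1}(F)·[F,R])/[F,R] intersected over all finite k; that is, γ_ω(F/[F,R]) ≅ φ_ω(G), the transfinite term of the Dwyer filtration of H_2(G). -/
/-!
Pull everything back to `F`: the `n`-th lower central term of `F/N` is `γₙ(F)·N / N`, so with
`N = [F,R] ≤ R` both sides are images of intersections of subgroups of `F`, and the claim becomes
`⋂ₙ γₙ(F)·N = ⋂ₖ R ∩ γₖ₊₁(F)·N`. The inclusion `⊇` holds because the series is decreasing, and
`⊆` because residual nilpotence of `F/R` says `⋂ₙ γₙ(F)·R = R`, so `⋂ₙ γₙ(F)·N` already lies in `R`.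
-/

open Subgroup QuotientGroup

theorem Antitone.iInf_sup_eq_iInf_inf_succ_sup {L : Type*} [CompleteLattice L] {a : ℕ → L}
    (ha : Antitone a) {N R : L} (hNR : N ≤ R) (hR : ⨅ n, (a n ⊔ R) ≤ R) :
    ⨅ n, (a n ⊔ N) = ⨅ k, (R ⊓ (a (k + 1) ⊔ N)) := by
  apply le_antisymm
  · have hle_R : ⨅ n, (a n ⊔ N) ≤ R :=
      (iInf_mono fun n => sup_le_sup_left hNR (a n)).trans hR
    exact le_iInf fun k => le_inf hle_R (iInf_le _ (k + 1))
  · exact le_iInf fun n => (iInf_le _ n).trans <|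
      inf_le_right.trans (sup_le_sup_right (ha n.le_succ) N)

section

variable {G : Type*} [Group G]

theorem Subgroup.comap_mk'_lowerCentralSeries (N : Subgroup G) [N.Normal] (n : ℕ) :
    ((⊤ : Subgroup (G ⧸ N)).lowerCentralSeries n).comap (mk' N) =
      (⊤ : Subgroup G).lowerCentralSeries n ⊔ N := by
  rw [← map_top_of_surjective (mk' N) (mk'_surjective N), ← map_lowerCentralSeries,
    comap_map_eq, ker_mk']

theorem Subgroup.comap_mk'_iInf_lowerCentralSeries (N : Subgroup G) [N.Normal] :
    (⨅ n : ℕ, (⊤ : Subgroup (G ⧸ N)).lowerCentralSeries n).comap (mk' N) =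
      ⨅ n : ℕ, ((⊤ : Subgroup G).lowerCentralSeries n ⊔ N) := by
  simp only [comap_iInf, comap_mk'_lowerCentralSeries]

end

/-- Let `G = F/R` with `F` free, and suppose `G` is residually nilpotent.  Then
`γ_ω(F/[F,R])` equals the intersection over all finite `k` of
`(R ∩ γ_{k+1}(F)·[F,R])/[F,R]` (here `γ_{k+1}(F) = lowerCentralSeries F k`); that is,
`γ_ω(F/[F,R])` is the transfinite Dwyer term `φ_ω(G) ⊆ H₂(G)`, with `H₂` computed by
Hopf's formula. -/
theorem lowerCentralSeries_omega_eq_dwyer_omega {α : Type*}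
    (R : Subgroup (FreeGroup α)) [R.Normal]
    (hres : (⨅ n : ℕ, (⊤ : Subgroup (FreeGroup α ⧸ R)).lowerCentralSeries n) = ⊥) :
    (⨅ n : ℕ, (⊤ : Subgroup
        (FreeGroup α ⧸ ⁅(⊤ : Subgroup (FreeGroup α)), R⁆)).lowerCentralSeries n) =
      ⨅ k : ℕ,
        ((R ⊓ ((⊤ : Subgroup (FreeGroup α)).lowerCentralSeries (k + 1) ⊔
            ⁅(⊤ : Subgroup (FreeGroup α)), R⁆)).map
          (QuotientGroup.mk' ⁅(⊤ : Subgroup (FreeGroup α)), R⁆)) := by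
  set N := ⁅(⊤ : Subgroup (FreeGroup α)), R⁆
  have hNR : N ≤ R := commutator_le_right ⊤ R
  have hR : ⨅ n : ℕ, ((⊤ : Subgroup (FreeGroup α)).lowerCentralSeries n ⊔ R) ≤ R := by
    rw [← comap_mk'_iInf_lowerCentralSeries, hres, MonoidHom.comap_bot, ker_mk']
  apply comap_injective (mk'_surjective N)
  rw [comap_mk'_iInf_lowerCentralSeries,
    (Subgroup.lowerCentralSeries_antitone ⊤).iInf_sup_eq_iInf_inf_succ_sup hNR hR, comap_iInf]
  refine iInf_congr fun k => ?_
  rw [comap_map_eq, ker_mk', sup_eq_left.mpr (le_inf hNR le_sup_right)]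
end
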